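/- Let p ≥ 1 be a real number. For integrable functions f, g : ℝ → ℝ define D_N(f,g) = ((∫ (f−g)⁺ dx)^p + (∫ (f−g)⁻ dx)^p)^(1/p) / ∫ max(|f|, |g|, |f−g|) dx when ∫ max(|f|, |g|, |f−g|) dx > 0, and D_N(f,g) = 0 otherwise. Then 0 ≤ D_N(f,g) ≤ 1 for all integrable f, g : ℝ → ℝ. -/
import Mathlib


open MeasureTheory

/-- The unnormalized distance on integrable functions:
`D(f,g) = ((∫ (f−g)⁺)^p + (∫ (f−g)⁻)^p)^(1/p)`. -/
noncomputable def funD (p : ℝ) (f g : ℝ → ℝ) : ℝ :=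
  ((∫ x, max (f x - g x) 0) ^ p + (∫ x, max (g x - f x) 0) ^ p) ^ (1 / p)

/-- The normalized distance on integrable functions:
`D_N(f,g) = D(f,g) / ∫ max(|f|, |g|, |f−g|)` when the denominator is positive,
and `0` otherwise. -/
noncomputable def funDN (p : ℝ) (f g : ℝ → ℝ) : ℝ :=
  if 0 < ∫ x, max |f x| (max |g x| |f x - g x|) then
    funD p f g / ∫ x, max |f x| (max |g x| |f x - g x|)
  else 0

lemma real_rpow_add_rpow_le_add {p a b : ℝ} (hp : 1 ≤ p) (ha : 0 ≤ a) (hb : 0 ≤ b) :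
    (a ^ p + b ^ p) ^ (1 / p) ≤ a + b := by
  lift a to NNReal using ha
  lift b to NNReal using hb
  have := NNReal.rpow_add_rpow_le_add a b hp
  calc ((a:ℝ) ^ p + (b:ℝ) ^ p) ^ (1 / p)
      = (((a ^ p + b ^ p) ^ (1 / p) : NNReal) : ℝ) := by
        push_cast [NNReal.coe_rpow]; ring_nf
    _ ≤ ((a + b : NNReal) : ℝ) := by exact_mod_cast this
    _ = (a : ℝ) + b := by push_cast; ring

/-- For real `p ≥ 1`, the normalized distance `D_N` takes values in `[0, 1]` on
Lebesgue integrable functions `ℝ → ℝ`. -/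
theorem funDN_mem_Icc (p : ℝ) (hp : 1 ≤ p) (f g : ℝ → ℝ)
    (hf : Integrable f) (hg : Integrable g) :
    0 ≤ funDN p f g ∧ funDN p f g ≤ 1 := by
  set M := ∫ x, max |f x| (max |g x| |f x - g x|) with hM
  set a := ∫ x, max (f x - g x) 0 with haa
  set b := ∫ x, max (g x - f x) 0 with hbb
  have ha : 0 ≤ a := integral_nonneg fun x => le_max_right _ _
  have hb : 0 ≤ b := integral_nonneg fun x => le_max_right _ _
  have hfg : Integrable (fun x => f x - g x) := hf.sub hg
  have hia : Integrable (fun x => max (f x - g x) 0) := hfg.pos_part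
  have hib : Integrable (fun x => max (g x - f x) 0) := (hg.sub hf).pos_part
  have hiM : Integrable (fun x => max |f x| (max |g x| |f x - g x|)) :=
    hf.abs.sup (hg.abs.sup hfg.abs)
  have hab : a + b = ∫ x, |f x - g x| := by
    rw [haa, hbb, ← integral_add hia hib]
    congr 1; funext x
    rcases le_total (f x) (g x) with h | h <;>
      simp [abs_of_nonneg, abs_of_nonpos, max_eq_left, max_eq_right, sub_nonneg.mpr h,
        sub_nonpos.mpr h, abs_sub_comm]
  have habM : a + b ≤ M := by
    rw [hab, hM]
    exact integral_mono hfg.abs hiM fun x =>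
      (le_max_right _ _).trans (le_max_right _ _)
  have hD0 : 0 ≤ funD p f g := by
    unfold funD
    positivity
  have hDle : funD p f g ≤ M := by
    calc funD p f g ≤ a + b := real_rpow_add_rpow_le_add hp ha hb
      _ ≤ M := habM
  unfold funDN
  split_ifs with h
  · constructor
    · exact div_nonneg hD0 h.le
    · rw [div_le_one h]; exact hDle
  · simp
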